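/- For each i ∈ {1,…,l}, the operator B − r_i I is injective with non-dense range in c₀, and (B − r_i I)⁻¹ is bounded on the range; i.e., r_i belongs to the class III₁ of Goldberg's classification of the spectrum of B on c₀. -/

import Mathlib

open Filter Topology
open Fin.NatCast

/-!
`T = B - r_i I` is lower bidiagonal: its diagonal `d k = r_k - r_i` vanishes at every index
`k ≡ i (mod l)`, and its subdiagonal `s_k` is bounded away from `0`. Solving
`x_k = ((T x)_{k+1} - d_{k+1} x_{k+1}) / s_k` backwards from the nearest following zero of `d`
recovers each `x_k` from at most `l` entries of `T x` with uniformly bounded coefficients, so `T`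
is bounded below (and hence injective). On the other hand the top-left `(i+1) × (i+1)` block of `T`
is lower triangular with last diagonal entry `d i = 0`, hence singular; a nonzero functional
supported on the first `i + 1` coordinates therefore annihilates the range of `T`.
-/

open scoped ZeroAtInfty
open Finset

namespace ZeroAtInftyContinuousMap

section Norm

variable {α β : Type*} [TopologicalSpace α] [SeminormedAddCommGroup β]

theorem norm_apply_le (f : C₀(α, β)) (x : α) : ‖f x‖ ≤ ‖f‖ :=
  norm_toBCF_eq_norm (f := f) ▸ f.toBCF.norm_coe_le_norm x

theorem norm_le {f : C₀(α, β)} {C : ℝ} (hC : 0 ≤ C) : ‖f‖ ≤ C ↔ ∀ x, ‖f x‖ ≤ C :=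
  norm_toBCF_eq_norm (f := f) ▸ BoundedContinuousFunction.norm_le hC

theorem continuous_eval_const (x : α) : Continuous fun f : C₀(α, β) => f x :=
  (ContinuousEvalConst.continuous_eval_const (F := BoundedContinuousFunction α β) x).comp
    isometry_toBCF.continuous

end Norm

variable {β : Type*} [TopologicalSpace β] [Zero β]

def natSingle (n : ℕ) (c : β) : C₀(ℕ, β) where
  toFun := Pi.single (M := fun _ => β) n c
  continuous_toFun := continuous_of_discreteTopology
  zero_at_infty' := by
    rw [cocompact_eq_atTop]
    exact tendsto_const_nhds.congr' <| (eventually_gt_atTop n).mono fun k hk =>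
      (Pi.single_eq_of_ne (M := fun _ => β) hk.ne' c).symm

@[simp]
theorem natSingle_apply (n : ℕ) (c : β) (k : ℕ) :
    natSingle n c k = Pi.single (M := fun _ => β) n c k :=
  rfl

end ZeroAtInftyContinuousMap

open ZeroAtInftyContinuousMap

theorem ContinuousLinearMap.injective_of_mul_norm_le {𝕜 E F : Type*} [NormedField 𝕜]
    [NormedAddCommGroup E] [NormedAddCommGroup F] [NormedSpace 𝕜 E] [NormedSpace 𝕜 F]
    (f : E →L[𝕜] F) {c : ℝ} (hc : 0 < c) (h : ∀ x, c * ‖x‖ ≤ ‖f x‖) : Function.Injective f :=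
  (injective_iff_map_eq_zero f).2 fun x hx =>
    norm_le_zero_iff.1 <| nonpos_of_mul_nonpos_right (by simpa [hx] using h x) hc

variable {𝕜 : Type*} [NormedField 𝕜]

structure IsLowerBidiagonal (T : C₀(ℕ, 𝕜) →L[𝕜] C₀(ℕ, 𝕜)) (d e : ℕ → 𝕜) : Prop where
  apply_zero : ∀ x, T x 0 = d 0 * x 0
  apply_succ : ∀ x k, T x (k + 1) = e k * x k + d (k + 1) * x (k + 1)

noncomputable def backSubstBound (S M : ℝ) : ℕ → ℝ
  | 0 => 0
  | n + 1 => (1 + M * backSubstBound S M n) / S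

theorem backSubstBound_nonneg {S M : ℝ} (hS : 0 ≤ S) (hM : 0 ≤ M) :
    ∀ n, 0 ≤ backSubstBound S M n
  | 0 => le_rfl
  | n + 1 => by
    have := backSubstBound_nonneg hS hM n
    rw [backSubstBound]
    positivity

theorem backSubstBound_pos {S M : ℝ} (hS : 0 < S) (hM : 0 ≤ M) {n : ℕ} (hn : n ≠ 0) :
    0 < backSubstBound S M n := by
  obtain ⟨n, rfl⟩ := Nat.exists_eq_succ_of_ne_zero hn
  have := backSubstBound_nonneg hS.le hM n
  rw [backSubstBound]
  positivity

def annihilatorWeight (d e : ℕ → 𝕜) : ℕ → 𝕜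
  | 0 => 1
  | k + 1 => -d k * annihilatorWeight d e k / e k

namespace IsLowerBidiagonal

variable {T : C₀(ℕ, 𝕜) →L[𝕜] C₀(ℕ, 𝕜)} {d e : ℕ → 𝕜}

theorem norm_mul_norm_apply_le (hT : IsLowerBidiagonal T d e) (x : C₀(ℕ, 𝕜)) (k : ℕ) :
    ‖e k‖ * ‖x k‖ ≤ ‖T x‖ + ‖d (k + 1)‖ * ‖x (k + 1)‖ :=
  calc ‖e k‖ * ‖x k‖ = ‖T x (k + 1) - d (k + 1) * x (k + 1)‖ := by
        rw [hT.apply_succ, add_sub_cancel_right, norm_mul]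
    _ ≤ ‖T x (k + 1)‖ + ‖d (k + 1) * x (k + 1)‖ := norm_sub_le _ _
    _ ≤ ‖T x‖ + ‖d (k + 1)‖ * ‖x (k + 1)‖ := by
        rw [norm_mul]
        gcongr
        exact norm_apply_le _ _

theorem norm_apply_le_backSubstBound_mul {S M : ℝ} (hT : IsLowerBidiagonal T d e) (hS : 0 < S)
    (he : ∀ k, S ≤ ‖e k‖) (hd : ∀ k, ‖d k‖ ≤ M) (x : C₀(ℕ, 𝕜)) :
    ∀ n k, (∃ m < n, d (k + m + 1) = 0) → ‖x k‖ ≤ backSubstBound S M n * ‖T x‖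
  | 0, _, ⟨_, hm, _⟩ => absurd hm (Nat.not_lt_zero _)
  | n + 1, k, ⟨m, hm, hdm⟩ => by
    have hM : 0 ≤ M := (norm_nonneg _).trans (hd 0)
    have hC := backSubstBound_nonneg hS.le hM n
    have hnext : ‖d (k + 1)‖ * ‖x (k + 1)‖ ≤ M * (backSubstBound S M n * ‖T x‖) := by
      rcases m with _ | m
      · rw [hdm, norm_zero, zero_mul]
        positivity
      · refine mul_le_mul (hd _) ?_ (norm_nonneg _) hM
        exact norm_apply_le_backSubstBound_mul hT hS he hd x n (k + 1)
          ⟨m, Nat.lt_of_succ_lt_succ hm, by convert hdm using 2; omega⟩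
    rw [backSubstBound, div_mul_eq_mul_div, le_div_iff₀ hS]
    nlinarith [hT.norm_mul_norm_apply_le x k, he k, norm_nonneg (x k)]

theorem exists_pos_mul_norm_le {S M : ℝ} {L : ℕ} (hT : IsLowerBidiagonal T d e) (hS : 0 < S)
    (he : ∀ k, S ≤ ‖e k‖) (hd : ∀ k, ‖d k‖ ≤ M) (hgap : ∀ k, ∃ m < L, d (k + m + 1) = 0) :
    ∃ c > (0 : ℝ), ∀ x, c * ‖x‖ ≤ ‖T x‖ := by
  have hM : 0 ≤ M := (norm_nonneg _).trans (hd 0)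
  have hL : L ≠ 0 := by
    obtain ⟨m, hm, -⟩ := hgap 0
    exact Nat.ne_zero_of_lt hm
  have hC := backSubstBound_pos hS hM hL
  refine ⟨(backSubstBound S M L)⁻¹, inv_pos.2 hC, fun x => ?_⟩
  rw [inv_mul_le_iff₀ hC, norm_le (by positivity)]
  exact fun k => hT.norm_apply_le_backSubstBound_mul hS he hd x L k (hgap k)

theorem sum_annihilatorWeight_mul_apply (hT : IsLowerBidiagonal T d e) (x : C₀(ℕ, 𝕜)) :
    ∀ n, (∀ k < n, e k ≠ 0) →
      ∑ k ∈ range (n + 1), annihilatorWeight d e k * T x k = annihilatorWeight d e n * d n * x n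
  | 0, _ => by simp [annihilatorWeight, hT.apply_zero]
  | n + 1, he => by
    rw [sum_range_succ,
      hT.sum_annihilatorWeight_mul_apply x n fun k hk => he k (hk.trans n.lt_succ_self),
      hT.apply_succ, annihilatorWeight]
    field_simp [he n n.lt_succ_self]
    ring

theorem not_denseRange (hT : IsLowerBidiagonal T d e) {N : ℕ} (hN : d N = 0)
    (he : ∀ k < N, e k ≠ 0) : ¬DenseRange T := by
  intro hdense
  let φ : C₀(ℕ, 𝕜) → 𝕜 := fun y => ∑ k ∈ range (N + 1), annihilatorWeight d e k * y k
  have hφ : Continuous φ := continuous_finsetSum _ fun k _ =>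
    continuous_const.mul (ZeroAtInftyContinuousMap.continuous_eval_const k)
  have hφT : φ ∘ T = 0 := funext fun x => by
    simp [φ, hT.sum_annihilatorWeight_mul_apply x N he, hN]
  have hφ₀ := congrFun (hdense.equalizer hφ continuous_const hφT) (natSingle 0 1)
  simp [φ, Pi.single_apply, annihilatorWeight] at hφ₀
  exact one_ne_zero hφ₀

end IsLowerBidiagonal

/-- For each `i`, `λ = r_i` lies in Goldberg's class `III₁` for `B` on `c₀`:
`B - r_i I` is injective, bounded below (so its inverse on the range is bounded), but its
range is not dense. -/
theorem stmt_10 (l l' : ℕ) [NeZero l] [NeZero l'] (r : Fin l → ℂ) (s : Fin l' → ℂ)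
    (hs : ∀ j, s j ≠ 0)
    (B : ZeroAtInftyContinuousMap ℕ ℂ →L[ℂ] ZeroAtInftyContinuousMap ℕ ℂ)
    (hB0 : ∀ x : ZeroAtInftyContinuousMap ℕ ℂ, B x 0 = r 0 * x 0)
    (hB : ∀ (x : ZeroAtInftyContinuousMap ℕ ℂ) (k : ℕ),
      B x (k + 1) = s (↑k) * x k + r (↑(k + 1)) * x (k + 1))
    (i : Fin l) :
    Function.Injective ⇑(B - r i • 1) ∧ ¬ DenseRange ⇑(B - r i • 1) ∧
      ∃ c > (0 : ℝ), ∀ x : ZeroAtInftyContinuousMap ℕ ℂ, c * ‖x‖ ≤ ‖(B - r i • 1) x‖ := by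
  have happly : ∀ x k, (B - r i • 1) x k = B x k - r i * x k := fun x k => by simp
  have hT : IsLowerBidiagonal (B - r i • 1) (fun k => r k - r i) (fun k => s k) :=
    ⟨fun x => by rw [happly, hB0, Nat.cast_zero]; ring, fun x k => by rw [happly, hB]; ring⟩
  obtain ⟨j₀, hj₀⟩ := Finite.exists_min fun j => ‖s j‖
  obtain ⟨j₁, hj₁⟩ := Finite.exists_max fun j => ‖r j - r i‖
  have hgap : ∀ k, ∃ m < l, r ((k + m + 1 : ℕ) : Fin l) - r i = 0 := fun k =>
    ⟨(i - ((k + 1 : ℕ) : Fin l)).val, Fin.is_lt _, by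
      rw [sub_eq_zero]; congr 1; push_cast; abel⟩
  obtain ⟨c, hc, hbound⟩ :=
    hT.exists_pos_mul_norm_le (norm_pos_iff.2 (hs j₀)) (fun _ => hj₀ _) (fun _ => hj₁ _) hgap
  exact ⟨(B - r i • 1).injective_of_mul_norm_le hc hbound,
    hT.not_denseRange (N := i) (by simp) (fun _ _ => hs _), c, hc, hbound⟩
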